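/- Let Σ be a finite alphabet, w a timed word over Σ with timestamps τ_1 < … < τ_{|w|}, let i ≥ 1 and n ≥ 1 be integers with i + n ≤ |w|, let W ⊆ T(Σ), and let Ŵ = {y + s | y ∈ W, s ≥ 0}. If there exists a real t₀ with τ_{i+n−1} ≤ t₀ < τ_{i+n} such that w(i+n,|w|) − t₀ ∈ W · T(Σ), then w(i,|w|) ∈ T^n(Σ) · Ŵ · T(Σ). -/

import Mathlib

open scoped Classical NNRat

namespace PTPM

/-- Timed words over an alphabet `α`: finite sequences of (letter, timestamp). -/
abbrev TWord (α : Type*) := List (α × ℝ)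

/-- Well-formedness of a timed word: positive, strictly increasing timestamps. -/
def IsTW {α : Type*} (w : TWord α) : Prop :=
  (∀ p ∈ w, 0 < p.2) ∧ w.Chain' (fun p q => p.2 < q.2)

/-- `T(Σ)`: the set of timed words over `α`. -/
def TW (α : Type*) : Set (TWord α) := {w | IsTW w}

/-- `T^n(Σ)`: the set of timed words over `α` of length `n`. -/
def TWn (α : Type*) (n : ℕ) : Set (TWord α) := {w | IsTW w ∧ w.length = n}

/-- The shift `w + s` of a timed word. -/
def shift {α : Type*} (w : TWord α) (s : ℝ) : TWord α := w.map fun p => (p.1, p.2 + s)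

/-- Last timestamp of a timed word (`0` for the empty word). -/
def lastT {α : Type*} (w : TWord α) : ℝ := (w.getLast?.map Prod.snd).getD 0

/-- Non-absorbing concatenation `w · w'`. -/
def ncat {α : Type*} (w w' : TWord α) : TWord α := w ++ shift w' (lastT w)

/-- Non-absorbing concatenation lifted to sets of timed words. -/
def ncatS {α : Type*} (W W' : Set (TWord α)) : Set (TWord α) :=
  {u | ∃ w ∈ W, ∃ w' ∈ W', u = ncat w w'}

/-- `τ_k`, the `k`-th timestamp (1-indexed), with `τ_0 = 0`. -/
def tau {α : Type*} (w : TWord α) (k : ℕ) : ℝ := lastT (w.take k)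

/-- The subsequence `w(i,j)` (1-indexed, both inclusive; empty if `i > j`). -/
def sub {α : Type*} (w : TWord α) (i j : ℕ) : TWord α := (w.take j).drop (i - 1)

/-- Letter at position `k` (1-indexed), if any. -/
def letterAt {α : Type*} (w : TWord α) (k : ℕ) : Option α := w[k - 1]?.map Prod.fst

/-- Embedding of timed words over `Σ` into timed words over `Σ ⊔ {$}`;
the terminal character `$` is modelled by `none`. -/
def liftW {α : Type*} (w : TWord α) : TWord (Option α) := w.map fun p => (some p.1, p.2)

/-- `T(Σ)` viewed inside the alphabet `Σ ⊔ {$}`. -/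
def TWl (α : Type*) : Set (TWord (Option α)) := liftW '' TW α

/-- `T^n(Σ)` viewed inside the alphabet `Σ ⊔ {$}`. -/
def TWln (α : Type*) (n : ℕ) : Set (TWord (Option α)) := liftW '' TWn α n

/-- The segment `w|_(t,t')`, a timed word over `Σ ⊔ {$}`. -/
noncomputable def seg {α : Type*} (w : TWord α) (t t' : ℝ) : TWord (Option α) :=
  (w.filter fun p => decide (t < p.2 ∧ p.2 < t')).map
      (fun p => ((some p.1 : Option α), p.2 - t))
    ++ [((none : Option α), t' - t)]

/-- `L_{-$}`: the words of `L` with the last element removed. -/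
def minusDollar {β : Type*} (L : Set (TWord β)) : Set (TWord β) :=
  {u | ∃ x ∈ L, x ≠ [] ∧ u = x.dropLast}

/-- Untimed projection of a timed word. -/
def untimed {α : Type*} (w : TWord α) : List α := w.map Prod.fst

/-- Untimed projection of a set of timed words. -/
def untimedS {α : Type*} (W : Set (TWord α)) : Set (List α) := untimed '' W

/-- `U · Σ*`: the set of finite words having a prefix in `U`. -/
def prefSet {σ : Type*} (U : Set (List σ)) : Set (List σ) := {x | ∃ u ∈ U, ∃ s, x = u ++ s}

/-- `Ŷ = {y + s | y ∈ Y, s ≥ 0}`. -/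
def hatS {α : Type*} (Y : Set (TWord α)) : Set (TWord α) :=
  {u | ∃ y ∈ Y, ∃ s : ℝ, 0 ≤ s ∧ u = shift y s}

/-- Comparison operators `⋈ ∈ {<, ≤, =, ≥, >}`. -/
inductive Cmp | lt | le | eq | ge | gt

def Cmp.eval : Cmp → ℝ → ℝ → Prop
  | .lt, a, b => a < b
  | .le, a, b => a ≤ b
  | .eq, a, b => a = b
  | .ge, a, b => b ≤ a
  | .gt, a, b => b < a

/-- Atomic guard constraints `x ⋈ d` (`d ∈ ℕ`) and `x ⋈ p` (`p` a parameter). -/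
inductive Atom (C P : Type*)
  | nat (x : C) (op : Cmp) (d : ℕ)
  | par (x : C) (op : Cmp) (p : P)

/-- A guard: a finite conjunction of atomic constraints. -/
abbrev Guard (C P : Type*) := List (Atom C P)

def Atom.sat {C P : Type*} (μ : C → ℝ) (v : P → ℚ≥0) : Atom C P → Prop
  | .nat x op d => op.eval (μ x) (d : ℝ)
  | .par x op p => op.eval (μ x) ((v p : ℚ) : ℝ)

/-- `μ ⊨ v(g)`. -/
def Guard.sat {C P : Type*} (μ : C → ℝ) (v : P → ℚ≥0) (g : Guard C P) : Prop :=
  ∀ a ∈ g, a.sat μ v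

def Atom.mapCP {C P C' P' : Type*} (fc : C → C') (fp : P → P') : Atom C P → Atom C' P'
  | .nat x op d => .nat (fc x) op d
  | .par x op p => .par (fc x) op (fp p)

def Guard.mapCP {C P C' P' : Type*} (fc : C → C') (fp : P → P') (g : Guard C P) :
    Guard C' P' :=
  g.map (Atom.mapCP fc fp)

/-- Parametric timed automaton with alphabet `α`, locations `L`, clocks `C`, parameters `P`.
An edge `(ℓ, g, a, R, ℓ')` has source `ℓ`, guard `g`, action `a`, resets `R`, target `ℓ'`. -/
structure PTA (α L C P : Type*) where
  init : L
  acc : Set L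
  edges : Set (L × Guard C P × α × Set C × L)
  finEdges : edges.Finite

/-- Reset of the clocks in `R` to `0`. -/
noncomputable def resetv {C : Type*} (μ : C → ℝ) (R : Set C) : C → ℝ :=
  fun x => if x ∈ R then 0 else μ x

/-- `Steps A v ℓ μ τ w ℓ'`: from configuration (location `ℓ`, clock valuation `μ`,
absolute time `τ`) there is a run of `A[v]` reading the timed word `w` and ending in `ℓ'`. -/
inductive Steps {α L C P : Type*} (A : PTA α L C P) (v : P → ℚ≥0) :
    L → (C → ℝ) → ℝ → TWord α → L → Prop
  | refl (ℓ : L) (μ : C → ℝ) (τ : ℝ) : Steps A v ℓ μ τ [] ℓ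
  | step {ℓ : L} {μ : C → ℝ} {τ : ℝ} {g : Guard C P} {a : α} {R : Set C} {ℓ' ℓ'' : L}
      {d : ℝ} {w : TWord α}
      (hd : 0 ≤ d)
      (he : (ℓ, g, a, R, ℓ') ∈ A.edges)
      (hg : Guard.sat (fun x => μ x + d) v g)
      (h : Steps A v ℓ' (resetv (fun x => μ x + d) R) (τ + d) w ℓ'') :
      Steps A v ℓ μ τ ((a, τ + d) :: w) ℓ''

/-- The language `L(A[v])`: associated words of accepting runs that are timed words. -/
def lang {α L C P : Type*} (A : PTA α L C P) (v : P → ℚ≥0) : Set (TWord α) :=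
  {w | IsTW w ∧ ∃ ℓ ∈ A.acc, Steps A v A.init (fun _ => 0) 0 w ℓ}

/-- `A_ℓ`: the PTA `A` with accepting set `{ℓ}`. -/
def PTA.locAcc {α L C P : Type*} (A : PTA α L C P) (ℓ : L) : PTA α L C P :=
  { A with acc := {ℓ} }

/-- The match set `M(w, A)`. -/
def matchSet {α L C P : Type*} (w : TWord α) (A : PTA (Option α) L C P) :
    Set (ℝ × ℝ × (P → ℚ≥0)) :=
  {x | 0 ≤ x.1 ∧ x.1 < x.2.1 ∧ seg w x.1 x.2.1 ∈ lang A x.2.2}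

/-- `V_{ℓ,n}`. -/
def Vset {α L C P : Type*} (A : PTA (Option α) L C P) (ℓ : L) (n : ℕ) :
    Set (P → ℚ≥0) :=
  {v | ∃ v' : P → ℚ≥0,
    (ncatS (lang (A.locAcc ℓ) v) (TWl α) ∩
      ncatS (ncatS (TWln α n) (hatS (minusDollar (lang A v')))) (TWl α)).Nonempty}

/-- The KMP-style skip value `Δ_KMP(ℓ, V) = min {n ≥ 1 | V ⊆ V_{ℓ,n}}` (min ∅ = ⊤). -/
noncomputable def DeltaKMP {α L C P : Type*} (A : PTA (Option α) L C P) (ℓ : L)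
    (V : Set (P → ℚ≥0)) : ℕ∞ :=
  sInf ((fun n : ℕ => (n : ℕ∞)) '' {n : ℕ | 1 ≤ n ∧ V ⊆ Vset A ℓ n})

/-- The non-parametric KMP-style skip value `Δ'_KMP(ℓ) = min_v Δ_KMP(ℓ, {v})`. -/
noncomputable def DeltaKMP' {α L C P : Type*} (A : PTA (Option α) L C P) (ℓ : L) : ℕ∞ :=
  ⨅ v : P → ℚ≥0, DeltaKMP A ℓ {v}

/-- Untimed words over `Σ`, viewed inside `Σ ⊔ {$}`. -/
def pureW {α : Type*} (x : List (Option α)) : Prop := ∀ c ∈ x, c ≠ none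

/-- `Σ^n · U` for sets of finite untimed words. -/
def catLen {α : Type*} (n : ℕ) (U : Set (List (Option α))) : Set (List (Option α)) :=
  {y | ∃ x u, x.length = n ∧ pureW x ∧ u ∈ U ∧ y = x ++ u}

/-- `Σ^N a Σ*`: finite words of length at least `N+1` whose `(N+1)`-st letter is `a`. -/
def sigNa {α : Type*} (N : ℕ) (a : α) : Set (List (Option α)) :=
  {x | N + 1 ≤ x.length ∧ x[N]? = some (some a)}

/-- The Quick-Search-style skip value `Δ_QS(a)` (min ∅ = ⊤). -/
noncomputable def DeltaQS {α L C P : Type*} (A : PTA (Option α) L C P) (N : ℕ) (a : α) :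
    ℕ∞ :=
  sInf ((fun n : ℕ => (n : ℕ∞)) '' {n : ℕ | 1 ≤ n ∧ ∃ v : P → ℚ≥0,
    (sigNa N a ∩ catLen n (untimedS (minusDollar (lang A v)))).Nonempty})

lemma shift_shift {α : Type*} (w : TWord α) (s t : ℝ) :
    shift (shift w s) t = shift w (s + t) := by
  simp [shift, List.map_map, Function.comp, add_assoc]

lemma shift_zero {α : Type*} (w : TWord α) : shift w 0 = w := by
  simp [shift]

lemma shift_append {α : Type*} (a b : TWord α) (s : ℝ) :
    shift (a ++ b) s = shift a s ++ shift b s := by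
  simp [shift]

lemma shift_ne_nil {α : Type*} {w : TWord α} (h : w ≠ []) (s : ℝ) :
    shift w s ≠ [] := by simpa [shift] using h

lemma lastT_shift {α : Type*} {w : TWord α} (h : w ≠ []) (s : ℝ) :
    lastT (shift w s) = lastT w + s := by
  simp [lastT, shift, List.getLast?_eq_getLast h,
    List.getLast?_eq_getLast (shift_ne_nil h s), List.getLast_map]

lemma lastT_append {α : Type*} (a : TWord α) {b : TWord α} (h : b ≠ []) :
    lastT (a ++ b) = lastT b := by
  simp [lastT, List.getLast?_append, List.getLast?_eq_getLast h]

lemma isTW_shift {α : Type*} {w : TWord α} (h : IsTW w) {s : ℝ} (hs : 0 ≤ s) :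
    IsTW (shift w s) := by
  constructor
  · rintro q hq
    rcases List.mem_map.1 hq with ⟨r, hr, rfl⟩
    have := h.1 r hr; dsimp; linarith
  · rw [shift, List.Chain', List.isChain_map]
    exact h.2.imp (fun a b hab => by dsimp; linarith)

/-- a match of a later suffix puts the earlier suffix into
`T^n(Σ) · Ŵ · T(Σ)`. -/
theorem statement16 {α : Type*} [Finite α] (w : TWord α) (hw : IsTW w)
    (i n : ℕ) (hi : 1 ≤ i) (hn : 1 ≤ n) (hin : i + n ≤ w.length)
    (W : Set (TWord α)) (hW : W ⊆ TW α)
    (h : ∃ t₀ : ℝ, tau w (i + n - 1) ≤ t₀ ∧ t₀ < tau w (i + n) ∧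
      shift (sub w (i + n) w.length) (-t₀) ∈ ncatS W (TW α)) :
    sub w i w.length ∈ ncatS (ncatS (TWn α n) (hatS W)) (TW α) := by
  obtain ⟨t₀, ht₁, ht₂, y, hy, z, hz, heq⟩ := h
  have hsub : sub w i w.length = w.drop (i-1) := by
    simp [sub, List.take_length]
  have hsub2 : sub w (i+n) w.length = w.drop (i+n-1) := by
    simp [sub, List.take_length]
  have hq : shift (w.drop (i+n-1)) (-t₀) = ncat y z := by
    rw [← hsub2]; exact heq
  have hq' : w.drop (i+n-1) = shift (ncat y z) t₀ := by
    rw [← hq, shift_shift]; simp [shift_zero]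
  have hdecomp : w.drop (i-1) = (w.drop (i-1)).take n ++ w.drop (i+n-1) := by
    conv_lhs => rw [← List.take_append_drop n (w.drop (i-1))]
    rw [List.drop_drop, show i - 1 + n = i+n-1 from by omega]
  have hplen : ((w.drop (i-1)).take n).length = n := by
    rw [List.length_take, List.length_drop]; omega
  have hpne : (w.drop (i-1)).take n ≠ [] := by
    intro h0; rw [h0] at hplen; simp at hplen; omega
  have hpsub : ((w.drop (i-1)).take n).Sublist w :=
    ((w.drop (i-1)).take_sublist n).trans (w.drop_sublist (i-1))
  have hpTW : IsTW ((w.drop (i-1)).take n) := by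
    refine ⟨fun q hq => hw.1 q (hpsub.mem hq), ?_⟩
    haveI : IsTrans (α × ℝ) (fun p q : α × ℝ => p.2 < q.2) :=
      ⟨fun a b c h1 h2 => lt_trans h1 h2⟩
    exact hw.2.sublist hpsub
  have hlastp : lastT ((w.drop (i-1)).take n) = tau w (i+n-1) := by
    have h2 : w.take (i+n-1) = w.take (i-1) ++ (w.drop (i-1)).take n := by
      rw [← List.take_add]
      congr 1
      omega
    rw [tau, h2, lastT_append _ hpne]
  have e1 : (t₀ - tau w (i+n-1)) + tau w (i+n-1) = t₀ := by ring
  have hyTW : y ∈ TW α := hW hy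
  by_cases hy0 : y = []
  · -- y empty: shift z instead
    refine ⟨ncat ((w.drop (i-1)).take n) (shift y (t₀ - tau w (i+n-1))),
      ⟨(w.drop (i-1)).take n, ⟨hpTW, hplen⟩, shift y (t₀ - tau w (i+n-1)),
      ⟨y, hy, t₀ - tau w (i+n-1), by linarith, rfl⟩, rfl⟩,
      shift z (t₀ - tau w (i+n-1)), isTW_shift hz (by linarith), ?_⟩
    subst hy0
    have hsy : shift ([] : TWord α) (t₀ - tau w (i+n-1)) = [] := by simp [shift]
    conv_lhs => rw [hsub, hdecomp, hq']
    have hpn : ncat ((w.drop (i-1)).take n) [] = (w.drop (i-1)).take n := by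
      simp [ncat, shift]
    rw [hsy, hpn]
    simp only [ncat, List.nil_append]
    rw [hlastp, shift_shift, shift_shift, e1,
      show lastT ([] : TWord α) = 0 from by simp [lastT], zero_add]
  · refine ⟨ncat ((w.drop (i-1)).take n) (shift y (t₀ - tau w (i+n-1))),
      ⟨(w.drop (i-1)).take n, ⟨hpTW, hplen⟩, shift y (t₀ - tau w (i+n-1)),
      ⟨y, hy, t₀ - tau w (i+n-1), by linarith, rfl⟩, rfl⟩, z, hz, ?_⟩
    conv_lhs => rw [hsub, hdecomp, hq']
    rw [ncat, ncat, ncat, hlastp, shift_append, shift_shift,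
      shift_shift, e1, List.append_assoc]
    congr 1
    congr 1
    rw [lastT_append _ (shift_ne_nil hy0 t₀), lastT_shift hy0]

end PTPM
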